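/- arXiv:2208.11528 — 3 statements merged into one kernel-verified Lean document; each statement's English description precedes it below -/
import Mathlib

section
/- Let f be an excursion. Then (i) the relation ⪯_f is a partial order on [0,1]; (ii) 0 is a root: 0 ⪯_f t for every t ∈ [0,1]; (iii) any two points have a most recent common ancestor: for all s,t ∈ [0,1] there is a unique u ∈ [0,1] such that for every r ∈ [0,1], r ⪯_f u if and only if (r ⪯_f s and r ⪯_f t); (iv) ancestral lineages are totally ordered: for every t ∈ [0,1], the relation ⪯_f restricted to {s ∈ [0,1] : s ⪯_f t} is a total order. -/
open Set Filter Topology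
open scoped Classical

noncomputable section

/-- Left limit of `f` at `t`, with the convention `f(0−) = 0`. -/
def lm (f : ℝ → ℝ) (t : ℝ) : ℝ := if t = 0 then 0 else Function.leftLim f t

/-- The jump `Δ_t(f) = f t − f(t−)`. -/
def jump (f : ℝ → ℝ) (t : ℝ) : ℝ := f t - lm f t

/-- `inf_{[s,t]} f`. -/
def infIcc (f : ℝ → ℝ) (s t : ℝ) : ℝ := sInf (f '' Icc s t)

/-- An excursion: a càdlàg function on `[0,1]`, nonnegative, vanishing at `1` (and
extended by `0` outside `[0,1]`), all of whose jumps are nonnegative. -/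
structure IsExcursion (f : ℝ → ℝ) : Prop where
  nonneg : ∀ t ∈ Icc (0:ℝ) 1, 0 ≤ f t
  zero_outside : ∀ t, t ∉ Icc (0:ℝ) 1 → f t = 0
  rightCont : ∀ t ∈ Ico (0:ℝ) 1, Tendsto f (𝓝[>] t) (𝓝 (f t))
  leftLimEx : ∀ t ∈ Ioc (0:ℝ) 1, Tendsto f (𝓝[<] t) (𝓝 (Function.leftLim f t))
  one : f 1 = 0
  jump_nonneg : ∀ t ∈ Icc (0:ℝ) 1, 0 ≤ jump f t

/-- The genealogical relation `s ⪯_f t` : `s ≤ t` and `f(s−) ≤ inf_{[s,t]} f`. -/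
def pre (f : ℝ → ℝ) (s t : ℝ) : Prop := s ≤ t ∧ lm f s ≤ infIcc f s t

/-- `x_s^t(f) = 1_{s ≤ t} · max(inf_{[s,t]} f − f(s−), 0)`. -/
def xst (f : ℝ → ℝ) (s t : ℝ) : ℝ := if s ≤ t then max (infIcc f s t - lm f s) 0 else 0

/-- The most recent common ancestor `s ∧_f t`. -/
def mrca (f : ℝ → ℝ) (s t : ℝ) : ℝ := sSup {r : ℝ | 0 ≤ r ∧ pre f r s ∧ pre f r t}

/-- `δ_t(a,b) = min(|a−b|, Δ_t(f) − |a−b|)`, the circle pseudo-distance on `[0, Δ_t(f)]`. -/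
def cdel (f : ℝ → ℝ) (t a b : ℝ) : ℝ := min |a - b| (jump f t - |a - b|)

/-- `d_O(s,t) = ∑_{s ≺_f r ⪯_f t} δ_r(0, x_r^t)`. -/
def dO (f : ℝ → ℝ) (s t : ℝ) : ℝ :=
  ∑' r : ℝ, if pre f s r ∧ s < r ∧ pre f r t then cdel f r 0 (xst f r t) else 0

/-- `d_T(s,t) = f t − inf_{[s,t]} f − ∑_{s ≺_f r ⪯_f t} x_r^t`, intended for `s ⪯_f t`. -/
def dTanc (f : ℝ → ℝ) (s t : ℝ) : ℝ :=
  f t - infIcc f s t - ∑' r : ℝ, if pre f s r ∧ s < r ∧ pre f r t then xst f r t else 0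

/-- The looptree pseudo-distance `d_L[f]`. -/
def dL (f : ℝ → ℝ) (s t : ℝ) : ℝ :=
  cdel f (mrca f s t) (xst f (mrca f s t) s) (xst f (mrca f s t) t)
    + dO f (mrca f s t) s + dO f (mrca f s t) t

/-- The tree pseudo-distance `d_T[f]`. -/
def dT (f : ℝ → ℝ) (s t : ℝ) : ℝ := dTanc f (mrca f s t) s + dTanc f (mrca f s t) t

/-- The vernation pseudo-distance `d_V[f] = d_T[f] + 2·d_L[f]`. -/
def dV (f : ℝ → ℝ) (s t : ℝ) : ℝ := dT f s t + 2 * dL f s t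

/-- `Jf(t) = ∑_{r ⪯_f t} x_r^t(f)`. -/
def Jop (f : ℝ → ℝ) (t : ℝ) : ℝ := ∑' r : ℝ, if pre f r t then xst f r t else 0

/-- `J^ε f(t) = ∑_{r ⪯_f t, Δ_r(f) ≥ ε} x_r^t(f)`. -/
def Jeps (f : ℝ → ℝ) (ε : ℝ) (t : ℝ) : ℝ :=
  ∑' r : ℝ, if pre f r t ∧ ε ≤ jump f r then xst f r t else 0

/-- Pure jump growth (PJG) excursion: `f(t) = ∑_{r ⪯_f t} x_r^t(f)` on `[0,1]`. -/
def IsPJG (f : ℝ → ℝ) : Prop := ∀ t ∈ Icc (0:ℝ) 1, f t = Jop f t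

/-- An increasing bijection from `[0,1]` onto itself. -/
def IncBij (l : ℝ → ℝ) : Prop :=
  StrictMonoOn l (Icc (0:ℝ) 1) ∧ Set.BijOn l (Icc (0:ℝ) 1) (Icc (0:ℝ) 1)

/-- The Skorokhod distance `ρ` on functions `[0,1] → ℝ`. -/
def skor (f g : ℝ → ℝ) : ℝ :=
  sInf {c : ℝ | 0 ≤ c ∧ ∃ l : ℝ → ℝ, IncBij l ∧
    ∀ x ∈ Icc (0:ℝ) 1, |l x - x| ≤ c ∧ |f x - g (l x)| ≤ c}

/-!
Transitivity rests on one analytic fact: if `f` stays above `f(s−)` on `[s, t]`, then so does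
its left limit `f(t−)`, so the two infimum conditions of `s ⪯ t ⪯ r` chain together.
For `s ≤ t`, the common ancestors of `s` and `t` are exactly the ancestors of `t` in `[0, s]`,
and their supremum `u` is again an ancestor of `t`: `f(u−)` is a limit of values of `f` just
left of `u`, which bound `f(r−)` from below for ancestors `r` close to `u`. This `u` is the most
recent common ancestor. Lineages are totally ordered because `s₁ ⪯ t` and `s₁ ≤ s₂ ≤ t`
already give `s₁ ⪯ s₂`.
-/

lemma le_infIcc {f : ℝ → ℝ} {s t c : ℝ} (hst : s ≤ t) (h : ∀ x ∈ Icc s t, c ≤ f x) :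
    c ≤ infIcc f s t :=
  le_csInf ⟨f s, s, ⟨le_rfl, hst⟩, rfl⟩ (by rintro y ⟨x, hx, rfl⟩; exact h x hx)

lemma lm_eq_leftLim {f : ℝ → ℝ} {t : ℝ} (ht : 0 < t) : lm f t = Function.leftLim f t :=
  if_neg ht.ne'

namespace IsExcursion

variable {f : ℝ → ℝ}

lemma nonneg' (hf : IsExcursion f) (x : ℝ) : 0 ≤ f x := by
  by_cases hx : x ∈ Icc (0:ℝ) 1
  · exact hf.nonneg x hx
  · rw [hf.zero_outside x hx]

lemma infIcc_le (hf : IsExcursion f) {s t x : ℝ} (hx : x ∈ Icc s t) : infIcc f s t ≤ f x :=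
  csInf_le ⟨0, by rintro y ⟨z, -, rfl⟩; exact hf.nonneg' z⟩ ⟨x, hx, rfl⟩

lemma infIcc_nonneg (hf : IsExcursion f) {s t : ℝ} (hst : s ≤ t) : 0 ≤ infIcc f s t :=
  le_infIcc hst fun x _ => hf.nonneg' x

lemma infIcc_anti (hf : IsExcursion f) {a b c d : ℝ} (hab : a ≤ b) (h : Icc a b ⊆ Icc c d) :
    infIcc f c d ≤ infIcc f a b :=
  le_infIcc hab fun _ hx => hf.infIcc_le (h hx)

lemma lm_le_self (hf : IsExcursion f) {t : ℝ} (ht : t ∈ Icc (0:ℝ) 1) : lm f t ≤ f t := by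
  have := hf.jump_nonneg t ht
  rw [jump] at this
  linarith

lemma le_lm_of_forall_Ioo (hf : IsExcursion f) {l r c : ℝ} (hr : r ∈ Ioc (0:ℝ) 1) (hlr : l < r)
    (h : ∀ x ∈ Ioo l r, c ≤ f x) : c ≤ lm f r := by
  rw [lm_eq_leftLim hr.1]
  refine ge_of_tendsto (hf.leftLimEx r hr) ?_
  filter_upwards [Ioo_mem_nhdsLT_of_mem ⟨hlr, le_rfl⟩] with x hx using h x hx

lemma lm_le_lm (hf : IsExcursion f) {s t : ℝ} (hs : 0 ≤ s) (hst : s < t) (ht : t ≤ 1)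
    (h : lm f s ≤ infIcc f s t) : lm f s ≤ lm f t :=
  hf.le_lm_of_forall_Ioo ⟨hs.trans_lt hst, ht⟩ hst fun _ hx =>
    h.trans (hf.infIcc_le ⟨hx.1.le, hx.2.le⟩)

lemma lm_le_of_forall_exists_Ioo (hf : IsExcursion f) {u c : ℝ} (hu : u ∈ Ioc (0:ℝ) 1)
    (h : ∀ l < u, ∃ r ∈ Ioo l u, lm f r ≤ c) : lm f u ≤ c := by
  rw [lm_eq_leftLim hu.1]
  refine le_of_forall_pos_le_add fun ε hε => ?_
  obtain ⟨l, hlu, hnear⟩ := mem_nhdsLT_iff_exists_Ioo_subset.1 <|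
    hf.leftLimEx u hu (Ioi_mem_nhds (sub_lt_self (Function.leftLim f u) hε))
  obtain ⟨r, ⟨hlr, hru⟩, hrc⟩ := h (max l 0) (max_lt hlu hu.1)
  have hnear_r : Function.leftLim f u - ε ≤ lm f r :=
    hf.le_lm_of_forall_Ioo ⟨(le_max_right l 0).trans_lt hlr, hru.le.trans hu.2⟩ hlr
      fun x hx => (hnear ⟨(le_max_left l 0).trans_lt hx.1, hx.2.trans hru⟩).le
  linarith

lemma pre_refl (hf : IsExcursion f) {t : ℝ} (ht : t ∈ Icc (0:ℝ) 1) : pre f t t := by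
  refine ⟨le_rfl, ?_⟩
  rw [infIcc, Icc_self, image_singleton, csInf_singleton]
  exact hf.lm_le_self ht

lemma pre_zero (hf : IsExcursion f) {t : ℝ} (ht : 0 ≤ t) : pre f 0 t :=
  ⟨ht, by simpa [lm] using hf.infIcc_nonneg ht⟩

lemma pre_of_pre_of_le (hf : IsExcursion f) {s₁ s₂ t : ℝ} (h₁₂ : s₁ ≤ s₂) (h₂t : s₂ ≤ t)
    (h : pre f s₁ t) : pre f s₁ s₂ :=
  ⟨h₁₂, h.2.trans (hf.infIcc_anti h₁₂ (Icc_subset_Icc le_rfl h₂t))⟩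

lemma pre_trans (hf : IsExcursion f) {s t r : ℝ} (hs : 0 ≤ s) (hr : r ≤ 1)
    (hst : pre f s t) (htr : pre f t r) : pre f s r := by
  have hsr : s ≤ r := hst.1.trans htr.1
  have hlm : lm f s ≤ lm f t := by
    rcases hst.1.eq_or_lt with rfl | hlt
    · exact le_rfl
    · exact hf.lm_le_lm hs hlt (htr.1.trans hr) hst.2
  refine ⟨hsr, le_infIcc hsr fun x hx => ?_⟩
  rcases le_or_gt x t with hxt | htx
  · exact hst.2.trans (hf.infIcc_le ⟨hx.1, hxt⟩)
  · exact (hlm.trans htr.2).trans (hf.infIcc_le ⟨htx.le, hx.2⟩)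

lemma pre_csSup (hf : IsExcursion f) {A : Set ℝ} {t : ℝ} (hne : A.Nonempty) (ht : t ≤ 1)
    (hA₀ : ∀ r ∈ A, 0 ≤ r) (hA : ∀ r ∈ A, pre f r t) : pre f (sSup A) t := by
  have hbdd : BddAbove A := ⟨t, fun r hr => (hA r hr).1⟩
  have hut : sSup A ≤ t := csSup_le hne fun r hr => (hA r hr).1
  by_cases huA : sSup A ∈ A
  · exact hA _ huA
  obtain ⟨r₀, hr₀⟩ := hne
  have hu₀ : 0 < sSup A := (hA₀ r₀ hr₀).trans_lt <|
    (le_csSup hbdd hr₀).lt_of_ne fun h => huA (h ▸ hr₀)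
  refine ⟨hut, hf.lm_le_of_forall_exists_Ioo ⟨hu₀, hut.trans ht⟩ fun l hl => ?_⟩
  obtain ⟨r, hrA, hlr⟩ := exists_lt_of_lt_csSup ⟨r₀, hr₀⟩ hl
  have hru : r < sSup A := (le_csSup hbdd hrA).lt_of_ne fun h => huA (h ▸ hrA)
  exact ⟨r, ⟨hlr, hru⟩, (hA r hrA).2.trans (hf.infIcc_anti hut (Icc_subset_Icc hru.le le_rfl))⟩

lemma exists_meet_of_le (hf : IsExcursion f) {s t : ℝ} (hs : 0 ≤ s) (hst : s ≤ t) (ht : t ≤ 1) :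
    ∃ u ∈ Icc (0:ℝ) 1, ∀ r ∈ Icc (0:ℝ) 1, pre f r u ↔ pre f r s ∧ pre f r t := by
  set A := {r | 0 ≤ r ∧ r ≤ s ∧ pre f r t}
  have h0A : (0:ℝ) ∈ A := ⟨le_rfl, hs, hf.pre_zero (hs.trans hst)⟩
  have hus : sSup A ≤ s := csSup_le ⟨0, h0A⟩ fun r hr => hr.2.1
  have hut : pre f (sSup A) t := hf.pre_csSup ⟨0, h0A⟩ ht (fun r hr => hr.1) fun r hr => hr.2.2
  have hu₀ : 0 ≤ sSup A := le_csSup ⟨s, fun r hr => hr.2.1⟩ h0A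
  refine ⟨sSup A, ⟨hu₀, hus.trans (hst.trans ht)⟩, fun r hr => ⟨fun hru => ?_, fun ⟨hrs, hrt⟩ => ?_⟩⟩
  · exact ⟨hf.pre_trans hr.1 (hst.trans ht) hru (hf.pre_of_pre_of_le hus hst hut),
      hf.pre_trans hr.1 ht hru hut⟩
  · exact hf.pre_of_pre_of_le (le_csSup ⟨s, fun r hr => hr.2.1⟩ ⟨hr.1, hrs.1, hrt⟩) hut.1 hrt

lemma existsUnique_meet (hf : IsExcursion f) {s t : ℝ} (hs : s ∈ Icc (0:ℝ) 1)
    (ht : t ∈ Icc (0:ℝ) 1) :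
    ∃! u, u ∈ Icc (0:ℝ) 1 ∧ ∀ r ∈ Icc (0:ℝ) 1, (pre f r u ↔ pre f r s ∧ pre f r t) := by
  obtain ⟨u, hu, hmeet⟩ : ∃ u ∈ Icc (0:ℝ) 1, ∀ r ∈ Icc (0:ℝ) 1,
      pre f r u ↔ pre f r s ∧ pre f r t := by
    rcases le_total s t with hst | hts
    · exact hf.exists_meet_of_le hs.1 hst ht.2
    · obtain ⟨u, hu, hmeet⟩ := hf.exists_meet_of_le ht.1 hts hs.2
      exact ⟨u, hu, fun r hr => (hmeet r hr).trans and_comm⟩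
  refine ⟨u, ⟨hu, hmeet⟩, fun v ⟨hv, hvmeet⟩ => le_antisymm ?_ ?_⟩
  · exact (hmeet v hv).2 ((hvmeet v hv).1 (hf.pre_refl hv)) |>.1
  · exact (hvmeet u hu).2 ((hmeet u hu).1 (hf.pre_refl hu)) |>.1

end IsExcursion

theorem statement0 (f : ℝ → ℝ) (hf : IsExcursion f) :
    (∀ t ∈ Icc (0:ℝ) 1, pre f t t) ∧
    (∀ s ∈ Icc (0:ℝ) 1, ∀ t ∈ Icc (0:ℝ) 1, pre f s t → pre f t s → s = t) ∧
    (∀ s ∈ Icc (0:ℝ) 1, ∀ t ∈ Icc (0:ℝ) 1, ∀ r ∈ Icc (0:ℝ) 1,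
        pre f s t → pre f t r → pre f s r) ∧
    (∀ t ∈ Icc (0:ℝ) 1, pre f 0 t) ∧
    (∀ s ∈ Icc (0:ℝ) 1, ∀ t ∈ Icc (0:ℝ) 1,
        ∃! u, u ∈ Icc (0:ℝ) 1 ∧
          ∀ r ∈ Icc (0:ℝ) 1, (pre f r u ↔ pre f r s ∧ pre f r t)) ∧
    (∀ t ∈ Icc (0:ℝ) 1, ∀ s₁ ∈ Icc (0:ℝ) 1, ∀ s₂ ∈ Icc (0:ℝ) 1,
        pre f s₁ t → pre f s₂ t → pre f s₁ s₂ ∨ pre f s₂ s₁) := by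
  refine ⟨fun t ht => hf.pre_refl ht, fun s _ t _ hst hts => le_antisymm hst.1 hts.1,
    fun s hs t _ r hr => hf.pre_trans hs.1 hr.2, fun t ht => hf.pre_zero ht.1,
    fun s hs t ht => hf.existsUnique_meet hs ht, fun t _ s₁ _ s₂ _ h₁ h₂ => ?_⟩
  rcases le_total s₁ s₂ with h | h
  · exact Or.inl (hf.pre_of_pre_of_le h h₂.1 h₁)
  · exact Or.inr (hf.pre_of_pre_of_le h h₁.1 h₂)
end
end

section
/- Let f be an excursion and let s,t ∈ [0,1] with s < t. Then the sum of x_r^t(f) over all r ∈ [0,1] satisfying s < r and r ≺_f t is at most f(t−) − inf_{[s,t]} f. (The summands are nonnegative and only countably many are nonzero, so the sum is well-defined in [0,∞].) -/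
open Set Filter Topology
open scoped Classical

noncomputable section

open MeasureTheory in
theorem statement2 (f : ℝ → ℝ) (hf : IsExcursion f) (s t : ℝ)
    (hs : s ∈ Icc (0:ℝ) 1) (ht : t ∈ Icc (0:ℝ) 1) (hst : s < t) :
    ∑' r : ℝ, (if s < r ∧ r < t ∧ pre f r t then ENNReal.ofReal (xst f r t) else 0)
      ≤ ENNReal.ofReal (lm f t - infIcc f s t) := by
  have fpos : ∀ u, 0 ≤ f u := by
    intro u
    by_cases h : u ∈ Icc (0:ℝ) 1
    · exact hf.nonneg u h
    · rw [hf.zero_outside u h]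
  have bdd : ∀ a b : ℝ, BddBelow (f '' Icc a b) := by
    intro a b; exact ⟨0, by rintro x ⟨u, -, rfl⟩; exact fpos u⟩
  have infle : ∀ (a b u : ℝ), u ∈ Icc a b → infIcc f a b ≤ f u := by
    intro a b u hu; exact csInf_le (bdd a b) (mem_image_of_mem f hu)
  have hll : ∀ (a x c : ℝ), x ∈ Ioc (0:ℝ) 1 → a < x →
      (∀ u ∈ Ioo a x, c ≤ f u) → c ≤ Function.leftLim f x := by
    intro a x c hx hax h
    exact ge_of_tendsto (hf.leftLimEx x hx)
      (mem_of_superset (Ioo_mem_nhdsLT_of_mem ⟨hax, le_rfl⟩) h)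
  set A := infIcc f s t with hA
  set B := lm f t with hB
  set S : ℝ → Set ℝ := fun r =>
    if s < r ∧ r < t ∧ pre f r t then Ioc (lm f r) (infIcc f r t) else ∅ with hS
  have ht0 : (0:ℝ) < t := lt_of_le_of_lt hs.1 hst
  -- containment of each interval in Ioc A B
  have hsub : ∀ r, s < r ∧ r < t ∧ pre f r t →
      Ioc (lm f r) (infIcc f r t) ⊆ Ioc A B := by
    rintro r ⟨hsr, hrt, -⟩
    have hr0 : 0 < r := lt_of_le_of_lt hs.1 hsr
    have h1 : A ≤ lm f r := by
      rw [lm, if_neg (ne_of_gt hr0)]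
      refine hll s r A ⟨hr0, le_of_lt (lt_of_lt_of_le hrt ht.2)⟩ hsr ?_
      intro u hu
      exact infle s t u ⟨le_of_lt hu.1, le_of_lt (hu.2.trans hrt)⟩
    have h2 : infIcc f r t ≤ B := by
      rw [hB, lm, if_neg (ne_of_gt ht0)]
      refine hll r t (infIcc f r t) ⟨ht0, ht.2⟩ hrt ?_
      intro u hu
      exact infle r t u ⟨le_of_lt hu.1, le_of_lt hu.2⟩
    exact Ioc_subset_Ioc h1 h2
  -- pairwise disjointness
  have key : ∀ a b : ℝ, a < b → Disjoint (S a) (S b) := by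
    intro a b hab
    simp only [hS]
    split_ifs with h1 h2
    · have hb0 : 0 < b := lt_of_le_of_lt hs.1 (h1.1.trans hab)
      have hsep : infIcc f a t ≤ lm f b := by
        rw [lm, if_neg (ne_of_gt hb0)]
        refine hll a b (infIcc f a t) ⟨hb0, le_of_lt (lt_of_lt_of_le h2.2.1 ht.2)⟩ hab ?_
        intro u hu
        exact infle a t u ⟨le_of_lt hu.1, le_of_lt (hu.2.trans h2.2.1)⟩
      rw [Set.Ioc_disjoint_Ioc]
      exact le_trans (min_le_left _ _) (le_trans hsep (le_max_right _ _))
    · exact disjoint_empty _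
    all_goals exact empty_disjoint _
  have hdisj : Pairwise (Function.onFun Disjoint S) := by
    intro a b hne
    rcases lt_or_gt_of_ne hne with h | h
    · exact key a b h
    · exact (key b a h).symm
  have hmeas : ∀ r, MeasurableSet (S r) := by
    intro r; simp only [hS]; split_ifs
    exacts [measurableSet_Ioc, MeasurableSet.empty]
  have hterm : ∀ r : ℝ,
      (if s < r ∧ r < t ∧ pre f r t then ENNReal.ofReal (xst f r t) else 0)
        = (volume.restrict (Ioc A B)) (S r) := by
    intro r
    simp only [hS]
    split_ifs with h
    · rw [Measure.restrict_apply measurableSet_Ioc,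
        inter_eq_left.mpr (hsub r h), Real.volume_Ioc, xst, if_pos h.2.1.le]
      rcases le_total (infIcc f r t - lm f r) 0 with hle | hle
      · rw [max_eq_right hle, ENNReal.ofReal_zero, ENNReal.ofReal_of_nonpos hle]
      · rw [max_eq_left hle]
    · simp
  calc ∑' r : ℝ, (if s < r ∧ r < t ∧ pre f r t then ENNReal.ofReal (xst f r t) else 0)
      = ∑' r : ℝ, (volume.restrict (Ioc A B)) (S r) := tsum_congr hterm
    _ ≤ (volume.restrict (Ioc A B)) univ :=
        MeasureTheory.tsum_measure_le_measure_univ (fun r => (hmeas r).nullMeasurableSet)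
          (hdisj.mono fun _ _ h => h.aedisjoint)
    _ = ENNReal.ofReal (B - A) := by
        rw [Measure.restrict_apply_univ, Real.volume_Ioc]
end
end

section
/- Let f be an excursion and let s,t ∈ [0,1] with s ≤ t. Then d_L[f](s,t) = ∑_{r∈[0,1]} δ_r(x_r^s(f), x_r^t(f)) and d_T[f](s,t) = f(s) + f(t) − 2·inf_{[s,t]} f − ∑_{r∈[0,1]} |x_r^s(f) − x_r^t(f)|, where both sums have at most countably many nonzero terms. -/
open Set Filter Topology
open scoped Classical

noncomputable section

/-!
Let `m = s ∧_f t`. For `r < m` the infimum of `f` over `[r, t]` is already attained on `[r, s]`,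
so `x_r^s = x_r^t`; for `r > m` the point `r` is an ancestor of at most one of `s`, `t`, so one of
`x_r^s`, `x_r^t` vanishes. Hence each sum over `[0,1]` splits into the term at `m` and the sums
along the two ancestral lines `m ≺_f r ⪯_f s` and `m ≺_f r ⪯_f t`, which are the `d_O` (resp.
`d_T`) sums. Summability comes from the telescoping bound `∑_{a < r ≤ b} x_r^b ≤ f b - inf_{[a,b]} f`,
and `inf_{[m,t]} f = inf_{[s,t]} f` gives `|x_m^s - x_m^t| = inf_{[m,s]} f - inf_{[s,t]} f`.
-/

variable {f : ℝ → ℝ} {s t : ℝ}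

lemma IsExcursion.apply_nonneg (hf : IsExcursion f) (u : ℝ) : 0 ≤ f u := by
  by_cases hu : u ∈ Icc (0:ℝ) 1
  · exact hf.nonneg u hu
  · exact (hf.zero_outside u hu).ge

lemma IsExcursion.infIcc_le_s3 (hf : IsExcursion f) {a b u : ℝ} (hu : u ∈ Icc a b) :
    infIcc f a b ≤ f u :=
  csInf_le ⟨0, by rintro _ ⟨v, -, rfl⟩; exact hf.apply_nonneg v⟩ (mem_image_of_mem f hu)

lemma le_infIcc_s3 {a b c : ℝ} (hab : a ≤ b) (h : ∀ u ∈ Icc a b, c ≤ f u) : c ≤ infIcc f a b :=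
  le_csInf ((nonempty_Icc.2 hab).image f) (by rintro _ ⟨u, hu, rfl⟩; exact h u hu)

lemma IsExcursion.infIcc_nonneg_s3 (hf : IsExcursion f) {a b : ℝ} (hab : a ≤ b) :
    0 ≤ infIcc f a b :=
  le_infIcc_s3 hab fun u _ => hf.apply_nonneg u

lemma IsExcursion.infIcc_anti_s3 (hf : IsExcursion f) {a a' b b' : ℝ} (ha : a ≤ a') (hb : b' ≤ b)
    (hab' : a' ≤ b') : infIcc f a b ≤ infIcc f a' b' :=
  le_infIcc_s3 hab' fun _ hu => hf.infIcc_le_s3 ⟨ha.trans hu.1, hu.2.trans hb⟩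

lemma IsExcursion.infIcc_eq_min (hf : IsExcursion f) {a b c : ℝ} (hab : a ≤ b) (hbc : b ≤ c) :
    infIcc f a c = min (infIcc f a b) (infIcc f b c) := by
  refine le_antisymm (le_min (hf.infIcc_anti_s3 le_rfl hbc hab) (hf.infIcc_anti_s3 hab le_rfl hbc))
    (le_infIcc_s3 (hab.trans hbc) fun u hu => ?_)
  rcases le_total u b with h | h
  · exact (min_le_left _ _).trans (hf.infIcc_le_s3 ⟨hu.1, h⟩)
  · exact (min_le_right _ _).trans (hf.infIcc_le_s3 ⟨h, hu.2⟩)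

lemma lm_zero : lm f 0 = 0 := if_pos rfl

lemma IsExcursion.tendsto_lm (hf : IsExcursion f) {u : ℝ} (hu : u ∈ Ioc (0:ℝ) 1) :
    Tendsto f (𝓝[<] u) (𝓝 (lm f u)) := by
  rw [lm, if_neg hu.1.ne']
  exact hf.leftLimEx u hu

lemma IsExcursion.le_lm (hf : IsExcursion f) {a u c : ℝ} (hu : u ∈ Ioc (0:ℝ) 1) (hau : a < u)
    (h : ∀ v ∈ Ioo a u, c ≤ f v) : c ≤ lm f u :=
  ge_of_tendsto (hf.tendsto_lm hu) (mem_of_superset (Ioo_mem_nhdsLT hau) h)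

lemma IsExcursion.pre_zero_s3 (hf : IsExcursion f) {b : ℝ} (hb : 0 ≤ b) : pre f 0 b :=
  ⟨hb, by rw [lm_zero]; exact hf.infIcc_nonneg_s3 hb⟩

lemma IsExcursion.pre_of_le (hf : IsExcursion f) {a r b : ℝ} (h : pre f a b) (har : a ≤ r)
    (hrb : r ≤ b) : pre f a r :=
  ⟨har, h.2.trans (hf.infIcc_anti_s3 le_rfl hrb har)⟩

lemma xst_nonneg (r u : ℝ) : 0 ≤ xst f r u := by
  unfold xst
  split_ifs
  exacts [le_max_right _ _, le_rfl]

lemma xst_of_pre {r u : ℝ} (h : pre f r u) : xst f r u = infIcc f r u - lm f r := by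
  rw [xst, if_pos h.1, max_eq_left (sub_nonneg.2 h.2)]

lemma xst_eq_zero_of_not_pre {r u : ℝ} (h : ¬ pre f r u) : xst f r u = 0 := by
  unfold xst
  split_ifs with hru
  · exact max_eq_right (sub_nonpos.2 (not_le.1 fun h' => h ⟨hru, h'⟩).le)
  · rfl

lemma IsExcursion.xst_le_jump (hf : IsExcursion f) {r : ℝ} (hr : r ∈ Icc (0:ℝ) 1) (u : ℝ) :
    xst f r u ≤ jump f r := by
  unfold xst
  split_ifs with hru
  · exact max_le (sub_le_sub_right (hf.infIcc_le_s3 ⟨le_rfl, hru⟩) _) (hf.jump_nonneg r hr)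
  · exact hf.jump_nonneg r hr

lemma IsExcursion.xst_le_infIcc_sub (hf : IsExcursion f) {a b c : ℝ} (ha : 0 ≤ a) (hac : a < c)
    (hcb : c ≤ b) (hb : b ≤ 1) : xst f c b ≤ infIcc f c b - infIcc f a b := by
  rw [xst, if_pos hcb]
  refine max_le (sub_le_sub_left ?_ _) (sub_nonneg.2 (hf.infIcc_anti_s3 hac.le le_rfl hcb))
  exact hf.le_lm ⟨ha.trans_lt hac, hcb.trans hb⟩ hac
    fun v hv => hf.infIcc_le_s3 ⟨hv.1.le, hv.2.le.trans hcb⟩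

lemma IsExcursion.sum_xst_le (hf : IsExcursion f) {a b : ℝ} (ha : 0 ≤ a) (hab : a ≤ b)
    (hb : b ≤ 1) {u : Finset ℝ} (hu : ∀ r ∈ u, r ∈ Ioc a b) :
    ∑ r ∈ u, xst f r b ≤ f b - infIcc f a b := by
  induction u using Finset.induction_on_min generalizing a with
  | empty => simpa using hf.infIcc_le_s3 ⟨hab, le_rfl⟩
  | insert c u hcu ih =>
    have hc := hu c (Finset.mem_insert_self c u)
    rw [Finset.sum_insert fun h => lt_irrefl c (hcu c h)]
    have hu' := ih (ha.trans hc.1.le) hc.2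
      fun r hr => ⟨hcu r hr, (hu r (Finset.mem_insert_of_mem hr)).2⟩
    linarith [hf.xst_le_infIcc_sub ha hc.1 hc.2 hb]

lemma IsExcursion.summable_indicator_xst (hf : IsExcursion f) {a b : ℝ} (ha : 0 ≤ a)
    (hab : a ≤ b) (hb : b ≤ 1) : Summable ((Ioc a b).indicator fun r => xst f r b) := by
  refine summable_of_sum_le (c := f b - infIcc f a b)
    (fun r => indicator_nonneg (fun r _ => xst_nonneg r b) r) fun u => ?_
  rw [Finset.sum_indicator_eq_sum_filter]
  exact hf.sum_xst_le ha hab hb fun r hr => (Finset.mem_filter.1 hr).2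

/-- The summand of `∑_{a ≺_f r ⪯_f b} F r (x_r^b)`; `dO` and the sum in `dTanc` are the cases
`F r d = min d (Δ_r(f) - d)` and `F r d = d`. -/
def ancestralLineTerm (f : ℝ → ℝ) (F : ℝ → ℝ → ℝ) (a b r : ℝ) : ℝ :=
  if pre f a r ∧ a < r ∧ pre f r b then F r (xst f r b) else 0

lemma IsExcursion.summable_ancestralLineTerm (hf : IsExcursion f) {a b : ℝ} (ha : 0 ≤ a)
    (hab : a ≤ b) (hb : b ≤ 1) {F : ℝ → ℝ → ℝ}
    (hF : ∀ r ∈ Icc (0:ℝ) 1, ∀ d, 0 ≤ d → d ≤ jump f r → 0 ≤ F r d ∧ F r d ≤ d) :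
    Summable (ancestralLineTerm f F a b) := by
  have hbound : ∀ r, pre f a r ∧ a < r ∧ pre f r b →
      0 ≤ F r (xst f r b) ∧ F r (xst f r b) ≤ xst f r b := fun r h =>
    have hr : r ∈ Icc (0:ℝ) 1 := ⟨ha.trans h.2.1.le, h.2.2.1.trans hb⟩
    hF r hr _ (xst_nonneg r b) (hf.xst_le_jump hr b)
  refine (hf.summable_indicator_xst ha hab hb).of_nonneg_of_le (fun r => ?_) (fun r => ?_)
    <;> unfold ancestralLineTerm <;> split_ifs with h
  · exact (hbound r h).1
  · exact le_rfl
  · rw [indicator_of_mem (show r ∈ Ioc a b from ⟨h.2.1, h.2.2.1⟩)]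
    exact (hbound r h).2
  · exact indicator_nonneg (fun r _ => xst_nonneg r b) r

lemma dO_eq_tsum_ancestralLineTerm (a b : ℝ) :
    dO f a b = ∑' r, ancestralLineTerm f (fun r d => min d (jump f r - d)) a b r := by
  refine tsum_congr fun r => ?_
  simp only [ancestralLineTerm, cdel, zero_sub, abs_neg, abs_of_nonneg (xst_nonneg r b)]

lemma le_mrca {r : ℝ} (hr : 0 ≤ r) (hrs : pre f r s) (hrt : pre f r t) : r ≤ mrca f s t :=
  le_csSup ⟨s, fun _ h => h.2.1.1⟩ ⟨hr, hrs, hrt⟩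

lemma IsExcursion.mrca_nonneg (hf : IsExcursion f) (hs : 0 ≤ s) (ht : 0 ≤ t) :
    0 ≤ mrca f s t :=
  le_mrca le_rfl (hf.pre_zero_s3 hs) (hf.pre_zero_s3 ht)

lemma IsExcursion.mrca_le_left (hf : IsExcursion f) (hs : 0 ≤ s) (ht : 0 ≤ t) :
    mrca f s t ≤ s :=
  csSup_le ⟨0, le_rfl, hf.pre_zero_s3 hs, hf.pre_zero_s3 ht⟩ fun _ h => h.2.1.1

lemma IsExcursion.pre_mrca_right (hf : IsExcursion f) (hs : s ∈ Icc (0:ℝ) 1) (hst : s ≤ t) :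
    pre f (mrca f s t) t := by
  set M := {r : ℝ | 0 ≤ r ∧ pre f r s ∧ pre f r t}
  have ht : 0 ≤ t := hs.1.trans hst
  have h0M : (0:ℝ) ∈ M := ⟨le_rfl, hf.pre_zero_s3 hs.1, hf.pre_zero_s3 ht⟩
  have hms := hf.mrca_le_left hs.1 ht
  refine ⟨hms.trans hst, le_infIcc_s3 (hms.trans hst) fun u hu => ?_⟩
  by_cases hmM : mrca f s t ∈ M
  · exact hmM.2.2.2.trans (hf.infIcc_le_s3 hu)
  have hm : 0 < mrca f s t :=
    (hf.mrca_nonneg hs.1 ht).lt_of_ne fun h => hmM (h ▸ h0M)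
  refine le_of_forall_lt_imp_le_of_dense fun c hc => ?_
  -- `f > c` just before `m`, and there are common ancestors `r` arbitrarily close to `m`
  obtain ⟨l, hl, hlm⟩ := mem_nhdsLT_iff_exists_Ioo_subset.1
    ((hf.tendsto_lm ⟨hm, hms.trans hs.2⟩).eventually_const_lt hc)
  obtain ⟨r, hrM, hr⟩ := exists_lt_of_lt_csSup ⟨0, h0M⟩ (max_lt hl hm : max l 0 < sSup M)
  have hrm : r < mrca f s t :=
    (le_mrca hrM.1 hrM.2.1 hrM.2.2).lt_of_ne fun h => hmM (h ▸ hrM)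
  calc c ≤ lm f r :=
        hf.le_lm ⟨(le_max_right l 0).trans_lt hr, hrM.2.1.1.trans hs.2⟩
          ((le_max_left l 0).trans_lt hr) fun v hv => (hlm ⟨hv.1, hv.2.trans hrm⟩).le
    _ ≤ f u := hrM.2.2.2.trans (hf.infIcc_le_s3 ⟨hrm.le.trans hu.1, hu.2⟩)

lemma IsExcursion.pre_mrca_left (hf : IsExcursion f) (hs : s ∈ Icc (0:ℝ) 1) (hst : s ≤ t) :
    pre f (mrca f s t) s :=
  hf.pre_of_le (hf.pre_mrca_right hs hst) (hf.mrca_le_left hs.1 (hs.1.trans hst)) hst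

lemma IsExcursion.exists_last_exit (hf : IsExcursion f) {u b c : ℝ} (hu : 0 ≤ u) (hub : u ≤ b)
    (hb : b ≤ 1) (hfu : f u < c) (hfb : c ≤ f b) :
    ∃ w ∈ Ioc u b, lm f w ≤ c ∧ ∀ v ∈ Icc w b, c ≤ f v := by
  set A := {v : ℝ | v ∈ Icc u b ∧ f v < c}
  have hAb : BddAbove A := ⟨b, fun v hv => hv.1.2⟩
  have huA : u ∈ A := ⟨⟨le_rfl, hub⟩, hfu⟩
  have huw : u ≤ sSup A := le_csSup hAb huA
  have hwb : sSup A ≤ b := csSup_le ⟨u, huA⟩ fun v hv => hv.1.2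
  have hwA : sSup A ∉ A := by
    intro hw
    have hwb' : sSup A < b := hwb.lt_of_ne fun h => (h ▸ hw.2).not_ge hfb
    obtain ⟨v, hv, hvw⟩ := (((hf.rightCont _ ⟨hu.trans huw, hwb'.trans_le hb⟩).eventually_lt_const
      hw.2).and (Ioo_mem_nhdsGT hwb')).exists
    exact (le_csSup hAb ⟨⟨huw.trans hvw.1.le, hvw.2.le⟩, hv⟩).not_gt hvw.1
  have huw' : u < sSup A := huw.lt_of_ne fun h => hwA (h ▸ huA)
  refine ⟨sSup A, ⟨huw', hwb⟩, le_of_not_gt fun hc => ?_, fun v hv => le_of_not_gt fun hv' => ?_⟩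
  · obtain ⟨l, hl, hlw⟩ := mem_nhdsLT_iff_exists_Ioo_subset.1
      ((hf.tendsto_lm ⟨hu.trans_lt huw', hwb.trans hb⟩).eventually_const_lt hc)
    obtain ⟨v, hvA, hlv⟩ := exists_lt_of_lt_csSup ⟨u, huA⟩ hl
    have hvw : v < sSup A := (le_csSup hAb hvA).lt_of_ne fun h => hwA (h ▸ hvA)
    exact lt_asymm (hlw ⟨hlv, hvw⟩) hvA.2
  · have hvA : v ∈ A := ⟨⟨huw.trans hv.1, hv.2⟩, hv'⟩
    exact hwA (le_antisymm (le_csSup hAb hvA) hv.1 ▸ hvA)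

lemma IsExcursion.infIcc_le_infIcc_mrca (hf : IsExcursion f) (hs : s ∈ Icc (0:ℝ) 1)
    (hst : s ≤ t) : infIcc f s t ≤ infIcc f (mrca f s t) s := by
  have ht : 0 ≤ t := hs.1.trans hst
  have hm0 := hf.mrca_nonneg hs.1 ht
  refine le_infIcc_s3 (hf.mrca_le_left hs.1 ht) fun u hu => le_of_not_gt fun hfu => ?_
  -- the last exit of `f` from below `inf_{[s,t]} f` before `s` is a common ancestor after `u`
  obtain ⟨w, hw, hlm, hge⟩ :=
    hf.exists_last_exit (hm0.trans hu.1) hu.2 hs.2 hfu (hf.infIcc_le_s3 ⟨le_rfl, hst⟩)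
  have hwt : pre f w t := by
    refine ⟨hw.2.trans hst, le_infIcc_s3 (hw.2.trans hst) fun v hv => hlm.trans ?_⟩
    rcases le_total v s with h | h
    exacts [hge v ⟨hv.1, h⟩, hf.infIcc_le_s3 ⟨h, hv.2⟩]
  have hwm := le_mrca ((hm0.trans hu.1).trans hw.1.le) (hf.pre_of_le hwt hw.2 hst) hwt
  linarith [hu.1, hw.1]

lemma IsExcursion.infIcc_mrca_right (hf : IsExcursion f) (hs : s ∈ Icc (0:ℝ) 1) (hst : s ≤ t) :
    infIcc f (mrca f s t) t = infIcc f s t := by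
  rw [hf.infIcc_eq_min (hf.mrca_le_left hs.1 (hs.1.trans hst)) hst]
  exact min_eq_right (hf.infIcc_le_infIcc_mrca hs hst)

lemma IsExcursion.abs_sub_xst_mrca (hf : IsExcursion f) (hs : s ∈ Icc (0:ℝ) 1) (hst : s ≤ t) :
    |xst f (mrca f s t) s - xst f (mrca f s t) t| = infIcc f (mrca f s t) s - infIcc f s t := by
  rw [xst_of_pre (hf.pre_mrca_left hs hst), xst_of_pre (hf.pre_mrca_right hs hst),
    hf.infIcc_mrca_right hs hst, sub_sub_sub_cancel_right,
    abs_of_nonneg (sub_nonneg.2 (hf.infIcc_le_infIcc_mrca hs hst))]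

lemma IsExcursion.xst_eq_of_lt_mrca (hf : IsExcursion f) (hs : s ∈ Icc (0:ℝ) 1) (hst : s ≤ t)
    {r : ℝ} (hr0 : 0 ≤ r) (hr : r < mrca f s t) : xst f r s = xst f r t := by
  have hms := hf.mrca_le_left hs.1 (hs.1.trans hst)
  have hinf : infIcc f r t = infIcc f r s := by
    rw [hf.infIcc_eq_min (hr.le.trans hms) hst, min_eq_left]
    calc infIcc f r s ≤ lm f (mrca f s t) :=
          hf.le_lm ⟨hr0.trans_lt hr, hms.trans hs.2⟩ hr
            fun v hv => hf.infIcc_le_s3 ⟨hv.1.le, hv.2.le.trans hms⟩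
      _ ≤ infIcc f (mrca f s t) t := (hf.pre_mrca_right hs hst).2
      _ ≤ infIcc f s t := hf.infIcc_anti_s3 hms le_rfl hst
  rw [xst, xst, if_pos (hr.le.trans hms), if_pos ((hr.le.trans hms).trans hst), hinf]

lemma IsExcursion.apply_abs_sub_xst_eq (hf : IsExcursion f) (hs : s ∈ Icc (0:ℝ) 1) (hst : s ≤ t)
    (F : ℝ → ℝ → ℝ) (hF0 : ∀ r ∈ Icc (0:ℝ) 1, F r 0 = 0) {r : ℝ} (hr : r ∈ Icc (0:ℝ) 1) :
    F r |xst f r s - xst f r t| =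
      (if r = mrca f s t then F (mrca f s t) |xst f (mrca f s t) s - xst f (mrca f s t) t| else 0)
        + ancestralLineTerm f F (mrca f s t) s r + ancestralLineTerm f F (mrca f s t) t r := by
  have hm0 := hf.mrca_nonneg hs.1 (hs.1.trans hst)
  rcases lt_trichotomy r (mrca f s t) with hrm | rfl | hmr
  · simp [ancestralLineTerm, hrm.ne, hrm.not_gt, hf.xst_eq_of_lt_mrca hs hst hr.1 hrm, hF0 r hr]
  · simp [ancestralLineTerm]
  have hnot : ¬ (pre f r s ∧ pre f r t) := fun h => (le_mrca (hm0.trans hmr.le) h.1 h.2).not_gt hmr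
  by_cases hrs : pre f r s
  · have hrt : ¬ pre f r t := fun h => hnot ⟨hrs, h⟩
    simp [ancestralLineTerm, hmr, hmr.ne', hrs, hrt, xst_eq_zero_of_not_pre hrt,
      hf.pre_of_le (hf.pre_mrca_left hs hst) hmr.le hrs.1, abs_of_nonneg (xst_nonneg r s)]
  by_cases hrt : pre f r t
  · simp [ancestralLineTerm, hmr, hmr.ne', hrs, hrt, xst_eq_zero_of_not_pre hrs,
      hf.pre_of_le (hf.pre_mrca_right hs hst) hmr.le hrt.1, abs_of_nonneg (xst_nonneg r t)]
  simp [ancestralLineTerm, hmr.ne', hrs, hrt, xst_eq_zero_of_not_pre, hF0 r hr]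

theorem IsExcursion.hasSum_apply_abs_sub_xst (hf : IsExcursion f) (hs : s ∈ Icc (0:ℝ) 1)
    (ht : t ∈ Icc (0:ℝ) 1) (hst : s ≤ t) (F : ℝ → ℝ → ℝ) (hF0 : ∀ r ∈ Icc (0:ℝ) 1, F r 0 = 0)
    (hF : ∀ r ∈ Icc (0:ℝ) 1, ∀ d, 0 ≤ d → d ≤ jump f r → 0 ≤ F r d ∧ F r d ≤ d) :
    HasSum (fun r : Icc (0:ℝ) 1 => F r |xst f r s - xst f r t|)
      (F (mrca f s t) |xst f (mrca f s t) s - xst f (mrca f s t) t|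
        + ∑' r, ancestralLineTerm f F (mrca f s t) s r
        + ∑' r, ancestralLineTerm f F (mrca f s t) t r) := by
  set m := mrca f s t
  have hm0 : 0 ≤ m := hf.mrca_nonneg hs.1 (hs.1.trans hst)
  have hms : m ≤ s := hf.mrca_le_left hs.1 (hs.1.trans hst)
  set g : ℝ → ℝ := fun r => (if r = m then F m |xst f m s - xst f m t| else 0)
    + ancestralLineTerm f F m s r + ancestralLineTerm f F m t r
  have hg : HasSum g _ := ((hasSum_ite_eq m _).add
    (hf.summable_ancestralLineTerm hm0 hms hs.2 hF).hasSum).add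
    (hf.summable_ancestralLineTerm hm0 (hms.trans hst) ht.2 hF).hasSum
  have hsupp : Function.support g ⊆ Icc 0 1 := by
    refine Function.support_subset_iff'.2 fun r hr => ?_
    have hline : ∀ b ≤ 1, ancestralLineTerm f F m b r = 0 := fun b hb =>
      if_neg fun h => hr ⟨hm0.trans h.2.1.le, h.2.2.1.trans hb⟩
    have hrm : r ≠ m := fun h => hr (h ▸ ⟨hm0, hms.trans hs.2⟩)
    simp [g, hline s hs.2, hline t ht.2, hrm]
  convert (hasSum_subtype_iff_of_support_subset hsupp).2 hg using 1
  funext r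
  exact hf.apply_abs_sub_xst_eq hs hst F hF0 r.2

theorem statement3 (f : ℝ → ℝ) (hf : IsExcursion f) (s t : ℝ)
    (hs : s ∈ Icc (0:ℝ) 1) (ht : t ∈ Icc (0:ℝ) 1) (hst : s ≤ t) :
    Summable (fun r : Icc (0:ℝ) 1 => cdel f r.1 (xst f r.1 s) (xst f r.1 t)) ∧
    dL f s t = ∑' r : Icc (0:ℝ) 1, cdel f r.1 (xst f r.1 s) (xst f r.1 t) ∧
    Summable (fun r : Icc (0:ℝ) 1 => |xst f r.1 s - xst f r.1 t|) ∧
    dT f s t = f s + f t - 2 * infIcc f s t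
      - ∑' r : Icc (0:ℝ) 1, |xst f r.1 s - xst f r.1 t| := by
  have hL := hf.hasSum_apply_abs_sub_xst hs ht hst (fun r d => min d (jump f r - d))
    (fun r hr => min_eq_left (by simpa using hf.jump_nonneg r hr))
    (fun _ _ d hd hdj => ⟨le_min hd (sub_nonneg.2 hdj), min_le_left _ _⟩)
  have hT := hf.hasSum_apply_abs_sub_xst hs ht hst (fun _ d => d) (fun _ _ => rfl)
    (fun _ _ _ hd _ => ⟨hd, le_rfl⟩)
  refine ⟨hL.summable, ?_, hT.summable, ?_⟩
  · rw [dL, dO_eq_tsum_ancestralLineTerm, dO_eq_tsum_ancestralLineTerm]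
    exact hL.tsum_eq.symm
  · rw [hT.tsum_eq, dT, dTanc, dTanc, hf.abs_sub_xst_mrca hs hst, hf.infIcc_mrca_right hs hst]
    simp only [ancestralLineTerm]
    ring
end
end
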